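/- arXiv:0804.3363 — 6 statements merged into one kernel-verified Lean document; each statement's English description precedes it below -/
import Mathlib

section
/- Let L : ℝ^d → ℝ^e be a quasi-isomorphism between the finite linear groups G and H. Then for every g ∈ G the composite linear map L ∘ g ∘ L⁻¹ belongs to H, and the map g ↦ L ∘ g ∘ L⁻¹ is a group isomorphism from G onto H; in particular, L is equivariant with respect to this isomorphism (L(g·v) = (L ∘ g ∘ L⁻¹)(L·v) for all g ∈ G, v ∈ ℝ^d). -/
open Matrix MvPolynomial

noncomputable section

/-- Action of an invertible real matrix on a vector in `ℝ^d`. -/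
def act {d : ℕ} (g : GL (Fin d) ℝ) (v : Fin d → ℝ) : Fin d → ℝ :=
  (g : Matrix (Fin d) (Fin d) ℝ).mulVec v

/-- Orbit of a vector under a subgroup of `GL (Fin d) ℝ`. -/
def orbitOf {d : ℕ} (G : Subgroup (GL (Fin d) ℝ)) (v : Fin d → ℝ) : Set (Fin d → ℝ) :=
  {x | ∃ g ∈ G, act g v = x}

/-- A quasi-isomorphism: a linear isomorphism sending `G`-orbits to `H`-orbits,
whose inverse sends `H`-orbits to `G`-orbits. -/
def IsQuasiIso {d e : ℕ} (G : Subgroup (GL (Fin d) ℝ)) (H : Subgroup (GL (Fin e) ℝ))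
    (L : (Fin d → ℝ) ≃ₗ[ℝ] (Fin e → ℝ)) : Prop :=
  (∀ v : Fin d → ℝ, ∃ w : Fin e → ℝ, ⇑L '' orbitOf G v = orbitOf H w) ∧
  (∀ w : Fin e → ℝ, ∃ v : Fin d → ℝ, ⇑L.symm '' orbitOf H w = orbitOf G v)

/-- `P` is a `G`-invariant polynomial. -/
def IsInv {d : ℕ} (G : Subgroup (GL (Fin d) ℝ)) (P : MvPolynomial (Fin d) ℝ) : Prop :=
  ∀ g ∈ G, ∀ v : Fin d → ℝ, eval (act g v) P = eval v P

/-- The polynomial map `ℝ^d → ℝ^m` given by a family of polynomials. -/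
def evalMap {d m : ℕ} (p : Fin m → MvPolynomial (Fin d) ℝ) (v : Fin d → ℝ) : Fin m → ℝ :=
  fun i => eval v (p i)

/-- Real Zariski closure of a subset of `ℝ^m`: the common zero set of all real
polynomials vanishing identically on `S`. -/
def zarClosure {m : ℕ} (S : Set (Fin m → ℝ)) : Set (Fin m → ℝ) :=
  {y | ∀ P : MvPolynomial (Fin m) ℝ, (∀ s ∈ S, eval s P = 0) → eval y P = 0}

/-- `G` contains no reflections: every nonidentity element `g` has `rank (g - 1) ≥ 2`. -/
def NoReflections {d : ℕ} (G : Subgroup (GL (Fin d) ℝ)) : Prop :=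
  ∀ g ∈ G, g ≠ 1 → 2 ≤ ((g : Matrix (Fin d) (Fin d) ℝ) - 1).rank

/-! An orbit-preserving linear isomorphism `L` sends each `g ∈ G` to some `h ∈ H` on every single
vector: `L (g v) = h (L v)`, with `h` depending on `v`. For fixed `g`, the vectors on which a given
`h` works form a subspace, and these finitely many subspaces cover `ℝ^d`; since a real vector space
is not a finite union of proper subspaces, one `h` works on all of `ℝ^d`. It is unique, so
`g ↦ h` is a well-defined multiplicative map `G → H`, and the same argument for `L⁻¹` inverts it. -/

theorem LinearMap.exists_eq_of_forall_exists_apply_eq {k V W ι : Type*} [DivisionRing k]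
    [Infinite k] [AddCommGroup V] [Module k V] [AddCommGroup W] [Module k W] [Finite ι]
    {f : V →ₗ[k] W} {g : ι → V →ₗ[k] W} (h : ∀ v, ∃ i, f v = g i v) : ∃ i, f = g i := by
  obtain ⟨i, hi⟩ := Subspace.exists_eq_top_of_iUnion_eq_univ
    (p := fun i => LinearMap.eqLocus f (g i)) (Set.iUnion_eq_univ_iff.2 h)
  exact ⟨i, LinearMap.eqLocus_eq_top.1 hi⟩

section

variable {d e : ℕ}

theorem act_one (v : Fin d → ℝ) : act 1 v = v := by
  simp [act]

theorem act_mul (g h : GL (Fin d) ℝ) (v : Fin d → ℝ) : act (g * h) v = act g (act h v) := by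
  simp [act, Matrix.mulVec_mulVec]

theorem act_injective : Function.Injective (act : GL (Fin d) ℝ → (Fin d → ℝ) → Fin d → ℝ) :=
  fun _ _ h => Units.ext (Matrix.ext_iff_mulVec.2 (congrFun h))

theorem exists_mem_act_eq_of_mem_orbitOf {G : Subgroup (GL (Fin d) ℝ)} {v x y : Fin d → ℝ}
    (hx : x ∈ orbitOf G v) (hy : y ∈ orbitOf G v) : ∃ g ∈ G, act g x = y := by
  obtain ⟨a, ha, rfl⟩ := hx
  obtain ⟨b, hb, rfl⟩ := hy
  exact ⟨b * a⁻¹, G.mul_mem hb (G.inv_mem ha), by rw [← act_mul, inv_mul_cancel_right]⟩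

def Intertwines (L : (Fin d → ℝ) ≃ₗ[ℝ] (Fin e → ℝ)) (g : GL (Fin d) ℝ) (h : GL (Fin e) ℝ) :
    Prop :=
  ∀ v, L (act g v) = act h (L v)

namespace Intertwines

variable {L : (Fin d → ℝ) ≃ₗ[ℝ] (Fin e → ℝ)} {g g' : GL (Fin d) ℝ} {h h' : GL (Fin e) ℝ}

theorem apply_symm (hgh : Intertwines L g h) (w : Fin e → ℝ) : L (act g (L.symm w)) = act h w := by
  rw [hgh, L.apply_symm_apply]

theorem unique (hgh : Intertwines L g h) (hgh' : Intertwines L g h') : h = h' :=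
  act_injective <| funext fun w => by rw [← hgh.apply_symm, ← hgh'.apply_symm]

theorem mul (hgh : Intertwines L g h) (hgh' : Intertwines L g' h') :
    Intertwines L (g * g') (h * h') := fun v => by
  rw [act_mul, act_mul, hgh, hgh']

theorem symm (hgh : Intertwines L g h) : Intertwines L.symm h g := fun w => by
  rw [← hgh.apply_symm, L.symm_apply_apply]

end Intertwines

theorem exists_intertwines_of_image_orbitOf {G : Subgroup (GL (Fin d) ℝ)}
    {H : Subgroup (GL (Fin e) ℝ)} [Finite H] {L : (Fin d → ℝ) ≃ₗ[ℝ] (Fin e → ℝ)}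
    (hL : ∀ v, ∃ w, ⇑L '' orbitOf G v = orbitOf H w) {g : GL (Fin d) ℝ} (hg : g ∈ G) :
    ∃ h ∈ H, Intertwines L g h := by
  have pointwise : ∀ v, ∃ h : H, L (act g v) = act (h : GL (Fin e) ℝ) (L v) := by
    intro v
    obtain ⟨w, hw⟩ := hL v
    have hv : L v ∈ orbitOf H w := hw ▸ ⟨v, ⟨1, G.one_mem, act_one v⟩, rfl⟩
    have hgv : L (act g v) ∈ orbitOf H w := hw ▸ ⟨act g v, ⟨g, hg, rfl⟩, rfl⟩
    obtain ⟨h, hh, hgh⟩ := exists_mem_act_eq_of_mem_orbitOf hv hgv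
    exact ⟨⟨h, hh⟩, hgh.symm⟩
  obtain ⟨h, hLh⟩ := LinearMap.exists_eq_of_forall_exists_apply_eq
    (f := L.toLinearMap ∘ₗ Matrix.mulVecLin (g : Matrix (Fin d) (Fin d) ℝ))
    (g := fun h : H => Matrix.mulVecLin ((h : GL (Fin e) ℝ) : Matrix (Fin e) (Fin e) ℝ) ∘ₗ
      L.toLinearMap) pointwise
  exact ⟨h, h.2, fun v => LinearMap.congr_fun hLh v⟩

end

/-- a quasi-isomorphism conjugates `G` onto `H` and is equivariant
with respect to the resulting group isomorphism. -/
theorem stmt_0 (d e : ℕ) (G : Subgroup (GL (Fin d) ℝ)) (H : Subgroup (GL (Fin e) ℝ))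
    [Finite G] [Finite H]
    (L : (Fin d → ℝ) ≃ₗ[ℝ] (Fin e → ℝ)) (hL : IsQuasiIso G H L) :
    (∀ g ∈ G, ∃ h ∈ H, ∀ w : Fin e → ℝ, L (act g (L.symm w)) = act h w) ∧
    ∃ φ : G ≃* H, ∀ (g : G) (v : Fin d → ℝ),
      L (act (g : GL (Fin d) ℝ) v) = act ((φ g : GL (Fin e) ℝ)) (L v) := by
  choose φ hφH hφ using fun g : G => exists_intertwines_of_image_orbitOf hL.1 g.2
  choose ψ hψG hψ using fun h : H => exists_intertwines_of_image_orbitOf hL.2 h.2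
  refine ⟨fun g hg => ⟨φ ⟨g, hg⟩, hφH _, (hφ ⟨g, hg⟩).apply_symm⟩, ?_⟩
  refine ⟨MulEquiv.mk ⟨fun g => ⟨φ g, hφH g⟩, fun h => ⟨ψ h, hψG h⟩, fun g => ?_, fun h => ?_⟩
    fun g g' => ?_, hφ⟩
  · exact Subtype.ext ((hψ _).unique (hφ g).symm)
  · exact Subtype.ext ((hφ _).unique (L.symm_symm ▸ (hψ h).symm))
  · exact Subtype.ext ((hφ _).unique ((hφ g).mul (hφ g')))

end
end

section
/- Let z ∈ ℂ^e be such that q_ℂ(z) ∈ ℝ^n (all coordinates real). Then there exist h ∈ H and vectors w₊, w₋ ∈ ℝ^e with h w₊ = w₊ and h w₋ = −w₋ such that q_ℂ(w₊ + i w₋) = q_ℂ(z). -/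
open Matrix MvPolynomial

noncomputable section

/-- Action of an invertible real matrix on a vector in `ℂ^d` (complexified action). -/
def actC {d : ℕ} (g : GL (Fin d) ℝ) (v : Fin d → ℂ) : Fin d → ℂ :=
  ((g : Matrix (Fin d) (Fin d) ℝ).map (algebraMap ℝ ℂ)).mulVec v

/-- The complexification `p_ℂ : ℂ^d → ℂ^m` of the real polynomial map given by `p`. -/
def pC {d m : ℕ} (p : Fin m → MvPolynomial (Fin d) ℝ) (v : Fin d → ℂ) : Fin m → ℂ :=
  fun i => eval v ((p i).map (algebraMap ℝ ℂ))

namespace Aux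
variable {e : ℕ}

/-- complexified matrix -/
def cmat {e : ℕ} (g : GL (Fin e) ℝ) : Matrix (Fin e) (Fin e) ℂ :=
  (g : Matrix (Fin e) (Fin e) ℝ).map (algebraMap ℝ ℂ)

lemma cmat_mul (g h : GL (Fin e) ℝ) : cmat (g * h) = cmat g * cmat h := by
  simp only [cmat, Units.val_mul]
  exact Matrix.map_mul (f := Complex.ofRealHom)

lemma cmat_one : cmat (1 : GL (Fin e) ℝ) = 1 := by
  simp [cmat]

lemma actC_mul (g h : GL (Fin e) ℝ) (v : Fin e → ℂ) :
    actC g (actC h v) = actC (g * h) v := by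
  show (cmat g).mulVec ((cmat h).mulVec v) = (cmat (g*h)).mulVec v
  rw [Matrix.mulVec_mulVec, cmat_mul]

lemma actC_one (v : Fin e → ℂ) : actC (1 : GL (Fin e) ℝ) v = v := by
  show (cmat 1).mulVec v = v
  rw [cmat_one, Matrix.one_mulVec]

/-- substitution endomorphism given by a complex matrix -/
def subst {e : ℕ} (M : Matrix (Fin e) (Fin e) ℂ) :
    MvPolynomial (Fin e) ℂ →ₐ[ℂ] MvPolynomial (Fin e) ℂ :=
  aeval (fun i => ∑ j, C (M i j) * X j)

lemma eval_subst (M : Matrix (Fin e) (Fin e) ℂ) (v : Fin e → ℂ) (P : MvPolynomial (Fin e) ℂ) :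
    eval v (subst M P) = eval (M.mulVec v) P := by
  have h1 : (aeval v : MvPolynomial (Fin e) ℂ →ₐ[ℂ] ℂ).comp (subst M) =
      aeval (M.mulVec v) := by
    rw [subst, comp_aeval]
    congr 1
    funext i
    simp [Matrix.mulVec, dotProduct, mul_comm]
  have h2 : ∀ (w : Fin e → ℂ) (Q : MvPolynomial (Fin e) ℂ), aeval (R := ℂ) w Q = eval w Q := by
    intro w Q
    rw [aeval_def, Algebra.algebraMap_self]
    rfl
  have := DFunLike.congr_fun h1 P
  simp only [AlgHom.coe_comp, Function.comp_apply, h2] at this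
  exact this


/-- linear polynomial vanishing at `p`, equal to 1 at `z'` -/
def lin (z' p : Fin e → ℂ) : MvPolynomial (Fin e) ℂ :=
  if h : ∃ j, p j ≠ z' j then
    C ((z' h.choose - p h.choose)⁻¹) * (X h.choose - C (p h.choose))
  else 1

lemma eval_lin_self (z' p : Fin e → ℂ) (hp : p ≠ z') : eval p (lin z' p) = 0 := by
  have h : ∃ j, p j ≠ z' j := by
    by_contra hc
    push_neg at hc
    exact hp (funext hc)
  rw [lin, dif_pos h]
  simp

lemma eval_lin_target (z' p : Fin e → ℂ) : eval z' (lin z' p) = 1 := by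
  by_cases h : ∃ j, p j ≠ z' j
  · rw [lin, dif_pos h]
    have hne : z' h.choose - p h.choose ≠ 0 := sub_ne_zero.mpr (Ne.symm h.choose_spec)
    simp [inv_mul_cancel₀ hne]
  · rw [lin, dif_neg h]
    simp

/-- real part polynomial -/
def rePart (G : MvPolynomial (Fin e) ℂ) : MvPolynomial (Fin e) ℝ :=
  ∑ m ∈ G.support, monomial m (G.coeff m).re

/-- imaginary part polynomial -/
def imPart (G : MvPolynomial (Fin e) ℂ) : MvPolynomial (Fin e) ℝ :=
  ∑ m ∈ G.support, monomial m (G.coeff m).im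

lemma coeff_rePart (G : MvPolynomial (Fin e) ℂ) (m : Fin e →₀ ℕ) :
    coeff m (rePart G) = (G.coeff m).re := by
  rw [rePart, coeff_sum]
  simp only [coeff_monomial]
  rw [Finset.sum_ite_eq' G.support m (fun m => (G.coeff m).re)]
  split
  · rfl
  · next h => rw [MvPolynomial.notMem_support_iff.mp h]; simp

lemma coeff_imPart (G : MvPolynomial (Fin e) ℂ) (m : Fin e →₀ ℕ) :
    coeff m (imPart G) = (G.coeff m).im := by
  rw [imPart, coeff_sum]
  simp only [coeff_monomial]
  rw [Finset.sum_ite_eq' G.support m (fun m => (G.coeff m).im)]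
  split
  · rfl
  · next h => rw [MvPolynomial.notMem_support_iff.mp h]; simp

lemma re_add_im_part (G : MvPolynomial (Fin e) ℂ) :
    (rePart G).map (algebraMap ℝ ℂ) + C Complex.I * (imPart G).map (algebraMap ℝ ℂ) = G := by
  apply MvPolynomial.ext
  intro m
  rw [coeff_add, coeff_map, coeff_C_mul, coeff_map, coeff_rePart, coeff_imPart]
  apply Complex.ext <;> simp

lemma eval_map_real (P : MvPolynomial (Fin e) ℝ) (v : Fin e → ℝ) :
    eval (fun j => (v j : ℂ)) (P.map (algebraMap ℝ ℂ)) = ((eval v P : ℝ) : ℂ) := by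
  rw [eval_map]
  have := MvPolynomial.eval₂_comp_left (Complex.ofRealHom) (RingHom.id ℝ) v P
  rw [RingHom.comp_id] at this
  exact this.symm

lemma actC_real (g : GL (Fin e) ℝ) (v : Fin e → ℝ) :
    actC g (fun j => (v j : ℂ)) = fun j => ((act g v j : ℝ) : ℂ) := by
  funext i
  simp [actC, act, Matrix.mulVec, dotProduct]


lemma orbit_sep {e n : ℕ} (H : Subgroup (GL (Fin e) ℝ)) [Finite H]
    (q : Fin n → MvPolynomial (Fin e) ℝ)
    (hqgen : ∀ Q, IsInv H Q ↔ Q ∈ Algebra.adjoin ℝ (Set.range q))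
    (z z' : Fin e → ℂ)
    (hzz : ∀ i, pC q z i = pC q z' i) :
    ∃ h ∈ H, actC h z = z' := by
  by_contra hcon
  push_neg at hcon
  classical
  have : Fintype H := Fintype.ofFinite H
  set S : Finset (Fin e → ℂ) :=
    ((Finset.image (fun h : H => actC (h : GL (Fin e) ℝ) z) Finset.univ) ∪
     (Finset.image (fun h : H => actC (h : GL (Fin e) ℝ) z') Finset.univ)).erase z' with hS
  set F : MvPolynomial (Fin e) ℂ := ∏ p ∈ S, lin z' p with hF
  have hFz' : eval z' F = 1 := by
    rw [hF, map_prod]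
    exact Finset.prod_eq_one (fun p _ => eval_lin_target z' p)
  have hFS : ∀ p ∈ S, eval p F = 0 := by
    intro p hp
    rw [hF, map_prod]
    exact Finset.prod_eq_zero hp (eval_lin_self z' p (Finset.ne_of_mem_erase hp))
  set G : MvPolynomial (Fin e) ℂ := ∑ h : H, subst (cmat (h : GL (Fin e) ℝ)) F with hG
  have hmemZ : ∀ h : H, actC (h : GL (Fin e) ℝ) z ∈ S := by
    intro h
    apply Finset.mem_erase.mpr
    exact ⟨hcon _ h.2, Finset.mem_union_left _
      (Finset.mem_image.mpr ⟨h, Finset.mem_univ _, rfl⟩)⟩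
  have hGz : eval z G = 0 := by
    rw [hG, map_sum]
    apply Finset.sum_eq_zero
    intro h _
    rw [eval_subst]
    exact hFS _ (hmemZ h)
  have hGz' : eval z' G ≠ 0 := by
    rw [hG, map_sum]
    have key : ∀ h : H, eval ((cmat (h : GL (Fin e) ℝ)).mulVec z') F =
        if actC (h : GL (Fin e) ℝ) z' = z' then 1 else 0 := by
      intro h
      by_cases hc : actC (h : GL (Fin e) ℝ) z' = z'
      · rw [if_pos hc]
        show eval (actC (h : GL (Fin e) ℝ) z') F = 1
        rw [hc]; exact hFz'
      · rw [if_neg hc]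
        apply hFS
        exact Finset.mem_erase.mpr ⟨hc, Finset.mem_union_right _
          (Finset.mem_image.mpr ⟨h, Finset.mem_univ _, rfl⟩)⟩
    simp only [eval_subst, key]
    rw [Finset.sum_boole]
    have hne : (Finset.filter (fun h : H => actC (h : GL (Fin e) ℝ) z' = z') Finset.univ).Nonempty := by
      refine ⟨1, Finset.mem_filter.mpr ⟨Finset.mem_univ _, ?_⟩⟩
      show actC (1 : GL (Fin e) ℝ) z' = z'
      exact actC_one z'
    exact_mod_cast Nat.cast_ne_zero.mpr (Finset.card_ne_zero_of_mem hne.choose_spec)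
  have hInv : ∀ g ∈ H, ∀ w : Fin e → ℂ, eval (actC g w) G = eval w G := by
    intro g hg w
    have step1 : eval (actC g w) G =
        ∑ h : H, eval w (subst (cmat (((h * ⟨g, hg⟩ : H)) : GL (Fin e) ℝ)) F) := by
      rw [hG, map_sum]
      apply Finset.sum_congr rfl
      intro h _
      rw [eval_subst, eval_subst]
      show eval ((cmat _).mulVec ((cmat g).mulVec w)) F = _
      rw [Matrix.mulVec_mulVec, ← cmat_mul]
      rfl
    rw [step1, hG, map_sum]
    exact Fintype.sum_equiv (Equiv.mulRight (⟨g, hg⟩ : H)) _ _ (fun h => rfl)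
  set A : MvPolynomial (Fin e) ℝ := rePart G with hA
  set B : MvPolynomial (Fin e) ℝ := imPart G with hB
  have hev : ∀ u : Fin e → ℝ, eval (fun j => ((u j : ℝ) : ℂ)) G =
      ((eval u A : ℝ) : ℂ) + Complex.I * ((eval u B : ℝ) : ℂ) := by
    intro u
    conv_lhs => rw [← re_add_im_part G]
    rw [map_add, _root_.map_mul, eval_C, eval_map_real, eval_map_real]
  have hkey : ∀ g ∈ H, ∀ v : Fin e → ℝ,
      ((eval (act g v) A : ℝ) : ℂ) + Complex.I * ((eval (act g v) B : ℝ) : ℂ) =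
      ((eval v A : ℝ) : ℂ) + Complex.I * ((eval v B : ℝ) : ℂ) := by
    intro g hg v
    have h1 := hInv g hg (fun j => ((v j : ℝ) : ℂ))
    rw [actC_real, hev, hev] at h1
    exact h1
  have hInvA : IsInv H A := by
    intro g hg v
    have := congrArg Complex.re (hkey g hg v)
    simpa using this
  have hInvB : IsInv H B := by
    intro g hg v
    have := congrArg Complex.im (hkey g hg v)
    simpa using this
  have hsame : ∀ (P : MvPolynomial (Fin e) ℝ), P ∈ Algebra.adjoin ℝ (Set.range q) →
      eval z (P.map (algebraMap ℝ ℂ)) = eval z' (P.map (algebraMap ℝ ℂ)) := by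
    intro P hP
    induction hP using Algebra.adjoin_induction with
    | mem x hx =>
      obtain ⟨i, rfl⟩ := hx
      exact hzz i
    | algebraMap r =>
      simp [MvPolynomial.algebraMap_eq]
    | add p₁ p₂ _ _ ih1 ih2 =>
      simp only [map_add, ih1, ih2]
    | mul p₁ p₂ _ _ ih1 ih2 =>
      simp only [_root_.map_mul, ih1, ih2]
  have hfin : eval z G = eval z' G := by
    conv_lhs => rw [← re_add_im_part G]
    conv_rhs => rw [← re_add_im_part G]
    rw [map_add, _root_.map_mul, map_add, _root_.map_mul, eval_C, eval_C,
      hsame A ((hqgen A).mp hInvA), hsame B ((hqgen B).mp hInvB)]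
  exact hGz' (hfin ▸ hGz)

lemma actC_re_im {e : ℕ} (g : GL (Fin e) ℝ) (w : Fin e → ℂ) (j : Fin e) :
    (actC g w j).re = act g (fun k => (w k).re) j ∧
    (actC g w j).im = act g (fun k => (w k).im) j := by
  constructor <;>
    simp [actC, act, Matrix.mulVec, dotProduct, Complex.re_sum, Complex.im_sum,
      Complex.mul_re, Complex.mul_im]

end Aux


open Aux in
/-- if `q_ℂ(z)` has real coordinates, then `q_ℂ(z) = q_ℂ(w₊ + i w₋)`
for some `h ∈ H` with `h w₊ = w₊` and `h w₋ = -w₋`. -/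
theorem stmt_8 (e n : ℕ) (H : Subgroup (GL (Fin e) ℝ)) [Finite H]
    (q : Fin n → MvPolynomial (Fin e) ℝ) (ee : Fin n → ℕ)
    (hqhom : ∀ i, (q i).IsHomogeneous (ee i))
    (hqgen : ∀ Q, IsInv H Q ↔ Q ∈ Algebra.adjoin ℝ (Set.range q))
    (z : Fin e → ℂ) (hz : ∀ i, (pC q z i).im = 0) :
    ∃ h ∈ H, ∃ wp wm : Fin e → ℝ, act h wp = wp ∧ act h wm = -wm ∧
      pC q (fun j => (wp j : ℂ) + Complex.I * (wm j : ℂ)) = pC q z := by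
  classical
  have hconj : ∀ i, pC q (fun j => (starRingEnd ℂ) (z j)) i = pC q z i := by
    intro i
    have h1 : (starRingEnd ℂ) (pC q z i) = pC q z i := Complex.conj_eq_iff_im.mpr (hz i)
    have h2 : (starRingEnd ℂ) (pC q z i) = pC q (fun j => (starRingEnd ℂ) (z j)) i := by
      show (starRingEnd ℂ) (eval z ((q i).map (algebraMap ℝ ℂ))) = _
      rw [pC, eval_map, eval_map]
      have h3 := MvPolynomial.eval₂_comp_left (starRingEnd ℂ) (algebraMap ℝ ℂ) z (q i)
      rw [h3]
      congr 1
      ext r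
      simp
    rw [← h2, h1]
  obtain ⟨h, hh, hact⟩ := Aux.orbit_sep H q hqgen z (fun j => (starRingEnd ℂ) (z j))
    (fun i => (hconj i).symm)
  refine ⟨h, hh, (fun j => (z j).re), (fun j => (z j).im), ?_, ?_, ?_⟩
  · funext j
    have h1 := (Aux.actC_re_im h z j).1
    have h2 : (actC h z j).re = (z j).re := by rw [congrFun hact j]; simp
    rw [← h1, h2]
  · funext j
    have h1 := (Aux.actC_re_im h z j).2
    have h2 : (actC h z j).im = -(z j).im := by rw [congrFun hact j]; simp
    rw [← h1, h2]
    rfl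
  · have hzeq : (fun j => (((z j).re : ℝ) : ℂ) + Complex.I * (((z j).im : ℝ) : ℂ)) = z := by
      funext j
      rw [mul_comm]
      exact Complex.re_add_im (z j)
    show pC q (fun j => (((z j).re : ℝ) : ℂ) + Complex.I * (((z j).im : ℝ) : ℂ)) = pC q z
    rw [hzeq]
end
end

section
/- Let H be a finite subgroup of GL(e,ℂ) and let φ : ℂ^e → ℂ^e be a continuous map such that φ(w) ∈ H·w for every w ∈ ℂ^e. Then there exists h ∈ H such that φ(w) = h w for all w ∈ ℂ^e. -/
open Matrix MvPolynomial

noncomputable section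

/-- Action of an invertible complex matrix on a vector in `ℂ^d`. -/
def actCC {d : ℕ} (g : GL (Fin d) ℂ) (v : Fin d → ℂ) : Fin d → ℂ :=
  (g : Matrix (Fin d) (Fin d) ℂ).mulVec v

/-- Orbit of a vector under a subgroup of `GL (Fin d) ℂ`. -/
def orbitCC {d : ℕ} (G : Subgroup (GL (Fin d) ℂ)) (v : Fin d → ℂ) : Set (Fin d → ℂ) :=
  {x | ∃ g ∈ G, actCC g v = x}

/-- `P` is a `G`-invariant complex polynomial. -/
def IsInvC {d : ℕ} (G : Subgroup (GL (Fin d) ℂ)) (P : MvPolynomial (Fin d) ℂ) : Prop :=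
  ∀ g ∈ G, ∀ v : Fin d → ℂ, eval (actCC g v) P = eval v P

/-- The polynomial map `ℂ^d → ℂ^m` given by a family of complex polynomials. -/
def evalMapC {d m : ℕ} (p : Fin m → MvPolynomial (Fin d) ℂ) (v : Fin d → ℂ) : Fin m → ℂ :=
  fun i => eval v (p i)

/-- `G` contains no pseudoreflections: every nonidentity `g` has `rank (g - 1) ≥ 2`. -/
def NoPseudoreflections {d : ℕ} (G : Subgroup (GL (Fin d) ℂ)) : Prop :=
  ∀ g ∈ G, g ≠ 1 → 2 ≤ ((g : Matrix (Fin d) (Fin d) ℂ) - 1).rank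


/-!
Off the finite union `Z` of the subspaces `ker (h - h')`, `h ≠ h'` in `H`, the points `h w` are
pairwise distinct, so the closed sets `{w | φ w = h w}` are disjoint there and cover `ℂ^e \ Z`.
This complement is connected, since a complex line through two of its points meets `Z` in finitely
many points and a plane minus finitely many points is connected. Hence a single `h` works on
`ℂ^e \ Z`, and by density and continuity everywhere.
-/

open Function Set

theorem IsPreconnected.eqOn_of_forall_exists_eq {X Y ι : Type*} [TopologicalSpace X]
    [TopologicalSpace Y] [T2Space Y] [Finite ι] {s : Set X} (hs : IsPreconnected s)
    {f : X → Y} {g : ι → X → Y} (hf : Continuous f) (hg : ∀ i, Continuous (g i))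
    (hinj : ∀ x ∈ s, Injective fun i => g i x) (hex : ∀ x ∈ s, ∃ i, f x = g i x)
    {x₀ : X} (hx₀ : x₀ ∈ s) {i : ι} (hi : f x₀ = g i x₀) : EqOn f (g i) s := by
  have hclosed : ∀ j, IsClosed {x | f x = g j x} := fun j => isClosed_eq hf (hg j)
  set others := ⋃ j : {j // j ≠ i}, {x | f x = g j x}
  have hcover : s ⊆ {x | f x = g i x} ∪ others := by
    intro x hx
    obtain ⟨j, hj⟩ := hex x hx
    by_cases hji : j = i
    · exact Or.inl (hji ▸ hj)
    · exact Or.inr (mem_iUnion.2 ⟨⟨j, hji⟩, hj⟩)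
  have hdisj : s ∩ ({x | f x = g i x} ∩ others) = ∅ := by
    refine eq_empty_iff_forall_notMem.2 fun x ⟨hx, hxi, hxo⟩ => ?_
    obtain ⟨⟨j, hji⟩, hxj⟩ := mem_iUnion.1 hxo
    exact hji (hinj x hx (hxj.symm.trans hxi))
  rcases isPreconnected_iff_subset_of_disjoint_closed.1 hs _ others (hclosed i)
      (isClosed_iUnion_of_finite fun j => hclosed j) hcover hdisj with h | h
  · exact h
  · exact (eq_empty_iff_forall_notMem.1 hdisj x₀ ⟨hx₀, hi, h hx₀⟩).elim

theorem subsingleton_setOf_add_smul_eq_zero {K W : Type*} [Field K] [AddCommGroup W]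
    [Module K W] {a : W} (ha : a ≠ 0) (b : W) : {c : K | a + c • b = 0}.Subsingleton := by
  intro c₁ h₁ c₂ h₂
  have hb : (c₁ - c₂) • b = 0 := by
    rw [sub_smul]; exact sub_eq_zero.2 (add_left_cancel (h₁.trans h₂.symm))
  refine sub_eq_zero.1 ((smul_eq_zero.1 hb).resolve_right fun hb0 => ha ?_)
  simpa [hb0] using h₁

section InjectiveApply

variable {V W ι : Type*} [AddCommGroup W] [Module ℂ W] [Countable ι]

theorem isPreconnected_setOf_injective_apply [AddCommGroup V] [Module ℂ V] [TopologicalSpace V]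
    [IsTopologicalAddGroup V] [ContinuousSMul ℂ V] (g : ι → V →ₗ[ℂ] W) :
    IsPreconnected {v | Injective fun i => g i v} := by
  refine isPreconnected_of_forall_pair fun x hx y hy => ?_
  let line : ℂ → V := fun c => x + c • (y - x)
  let bad : Set ℂ := {c | line c ∉ {v | Injective fun i => g i v}}
  have hbad : bad.Countable := by
    have hsub : bad ⊆ ⋃ p : ι × ι, {c | p.1 ≠ p.2 ∧ g p.1 (line c) = g p.2 (line c)} := by
      intro c hc
      obtain ⟨i, j, hij, hne⟩ := not_injective_iff.1 hc
      exact mem_iUnion.2 ⟨(i, j), hne, hij⟩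
    refine (countable_iUnion fun p => Subsingleton.countable ?_).mono hsub
    let D := g p.1 - g p.2
    have hD : ∀ c, g p.1 (line c) = g p.2 (line c) ↔ D x + c • D (y - x) = 0 := fun c => by
      rw [show D x + c • D (y - x) = D (line c) by simp [line], LinearMap.sub_apply, sub_eq_zero]
    intro c₁ ⟨hp, h₁⟩ c₂ ⟨_, h₂⟩
    refine subsingleton_setOf_add_smul_eq_zero (fun h => hp (hx ?_)) _
      ((hD c₁).1 h₁) ((hD c₂).1 h₂)
    simpa [D, sub_eq_zero] using h
  have hline : Continuous line := continuous_const.add (continuous_id.smul continuous_const)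
  refine ⟨line '' badᶜ, ?_, ⟨0, by simpa [bad, line] using hx, by simp [line]⟩,
    ⟨1, by simpa [bad, line] using hy, by simp [line]⟩, ?_⟩
  · rintro _ ⟨c, hc, rfl⟩
    exact not_not.1 hc
  · have hrank : 1 < Module.rank ℝ ℂ := by rw [Complex.rank_real_complex]; norm_num
    exact (hbad.isConnected_compl_of_one_lt_rank hrank).isPreconnected.image _ hline.continuousOn

theorem dense_setOf_injective_apply [NormedAddCommGroup V] [NormedSpace ℂ V]
    [FiniteDimensional ℂ V] {g : ι → V →ₗ[ℂ] W} (hg : Injective g) :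
    Dense {v | Injective fun i => g i v} := by
  have hker : ∀ p : {p : ι × ι // p.1 ≠ p.2},
      Dense (LinearMap.ker (g p.1.1 - g p.1.2) : Set V)ᶜ := fun p => by
      rw [← interior_eq_empty_iff_dense_compl, ← not_nonempty_iff_eq_empty]
      refine fun hint => p.2 (hg (sub_eq_zero.1 (LinearMap.ker_eq_top.1 ?_)))
      exact Submodule.eq_top_of_nonempty_interior' _ hint
  refine (dense_iInter_of_isOpen (fun p => (Submodule.closed_of_finiteDimensional _).isOpen_compl)
    hker).mono fun v hv i j hij => ?_
  by_contra hne
  exact mem_iInter.1 hv ⟨(i, j), hne⟩ (by simpa [sub_eq_zero] using hij)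

end InjectiveApply

/-- a continuous map sending each `w` into its `H`-orbit is given
by a single element `h ∈ H`. -/
theorem stmt_11 (e : ℕ) (H : Subgroup (GL (Fin e) ℂ)) [Finite H]
    (φ : (Fin e → ℂ) → (Fin e → ℂ)) (hcont : Continuous φ)
    (horb : ∀ w : Fin e → ℂ, φ w ∈ orbitCC H w) :
    ∃ h ∈ H, ∀ w : Fin e → ℂ, φ w = actCC h w := by
  let act : H → (Fin e → ℂ) →ₗ[ℂ] (Fin e → ℂ) := fun h =>
    mulVecLin ((h : GL (Fin e) ℂ) : Matrix (Fin e) (Fin e) ℂ)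
  have hact_inj : Injective act := fun h k hhk =>
    Subtype.ext (Units.ext (Matrix.toLin'.injective hhk))
  have hact_cont : ∀ h, Continuous (act h) := fun h => (act h).continuous_of_finiteDimensional
  have hexists : ∀ w, ∃ h, φ w = act h w := fun w => by
    obtain ⟨h, hh, hw⟩ := horb w
    exact ⟨⟨h, hh⟩, hw.symm⟩
  have hdense := dense_setOf_injective_apply hact_inj
  obtain ⟨x₀, hx₀⟩ := hdense.nonempty
  obtain ⟨h, hx₀h⟩ := hexists x₀
  refine ⟨h, h.2, congrFun (Continuous.ext_on hdense hcont (hact_cont h) ?_)⟩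
  exact (isPreconnected_setOf_injective_apply act).eqOn_of_forall_exists_eq hcont hact_cont
    (fun _ hx => hx) (fun x _ => hexists x) hx₀ hx₀h
end
end

section
/- Let G be a finite subgroup of GL(d,ℂ) and let v, w ∈ ℂ^d. If P(v) = P(w) for every G-invariant polynomial P ∈ ℂ[x₁,…,x_d], then there exists g ∈ G with g·v = w. -/
open Matrix MvPolynomial

noncomputable section

section Aux

variable {d : ℕ}

lemma actCC_one' (v : Fin d → ℂ) : (Matrix.mulVec ((1 : GL (Fin d) ℂ) : Matrix (Fin d) (Fin d) ℂ) v) = v := by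
  simp

lemma my_eval_aeval (x : Fin d → ℂ) (f : Fin d → MvPolynomial (Fin d) ℂ)
    (Q : MvPolynomial (Fin d) ℂ) :
    eval x (aeval f Q) = eval (fun i => eval x (f i)) Q := by
  rw [aeval_def, eval_eval₂]
  have : ((eval x).comp (algebraMap ℂ (MvPolynomial (Fin d) ℂ))) = RingHom.id ℂ := by
    ext c; simp [algebraMap_eq]
  rw [this]
  rfl

/-- Interpolation: a polynomial vanishing on `F` and equal to 1 at `p ∉ F`. -/
lemma interp (F : Finset (Fin d → ℂ)) (p : Fin d → ℂ) (hp : p ∉ F) :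
    ∃ Q : MvPolynomial (Fin d) ℂ, (∀ q ∈ F, eval q Q = 0) ∧ eval p Q = 1 := by
  classical
  have hne : ∀ q ∈ F, ∃ i, p i ≠ q i := by
    intro q hq
    by_contra hc
    push_neg at hc
    exact hp (by rwa [show p = q from funext hc])
  set L : (Fin d → ℂ) → MvPolynomial (Fin d) ℂ := fun q =>
    if h : ∃ i, p i ≠ q i then
      C (p h.choose - q h.choose)⁻¹ * (X h.choose - C (q h.choose)) else 1 with hL
  refine ⟨∏ q ∈ F, L q, ?_, ?_⟩
  · intro q hq
    rw [eval_prod]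
    apply Finset.prod_eq_zero hq
    have h := hne q hq
    simp [hL, dif_pos h]
  · rw [eval_prod]
    apply Finset.prod_eq_one
    intro q hq
    have h := hne q hq
    have hne' : p h.choose - q h.choose ≠ 0 := sub_ne_zero.mpr h.choose_spec
    simp [hL, dif_pos h, inv_mul_cancel₀ hne']

/-- Separation: a polynomial vanishing on `S` and equal to 1 on `T`, for disjoint `S, T`. -/
lemma sep (S T : Finset (Fin d → ℂ)) (hd : Disjoint S T) :
    ∃ Q : MvPolynomial (Fin d) ℂ, (∀ s ∈ S, eval s Q = 0) ∧ ∀ t ∈ T, eval t Q = 1 := by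
  classical
  have key : ∀ t ∈ T, ∃ Q : MvPolynomial (Fin d) ℂ,
      (∀ q ∈ S ∪ T.erase t, eval q Q = 0) ∧ eval t Q = 1 := by
    intro t ht
    apply interp
    simp only [Finset.mem_union, Finset.mem_erase, not_or]
    exact ⟨fun hS => (Finset.disjoint_left.mp hd) hS ht, fun h' => h'.1 rfl⟩
  choose! Qt hQt0 hQt1 using key
  refine ⟨∑ t ∈ T, Qt t, ?_, ?_⟩
  · intro s hs
    rw [eval_sum]
    apply Finset.sum_eq_zero
    intro t ht
    exact hQt0 t ht s (Finset.mem_union_left _ hs)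
  · intro t ht
    rw [eval_sum]
    rw [Finset.sum_eq_single t]
    · exact hQt1 t ht
    · intro t' ht' hne
      exact hQt0 t' ht' t (Finset.mem_union_right _ (Finset.mem_erase.mpr ⟨(Ne.symm hne), ht⟩))
    · intro h; exact absurd ht h

end Aux


lemma actCC_mul {d : ℕ} (a b : GL (Fin d) ℂ) (x : Fin d → ℂ) :
    actCC (a * b) x = actCC a (actCC b x) := by
  simp [actCC, mulVec_mulVec]

lemma actCC_one {d : ℕ} (x : Fin d → ℂ) : actCC (1 : GL (Fin d) ℂ) x = x := by
  simp [actCC]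

/-- invariant polynomials separate the orbits of a finite
complex linear group. -/
theorem stmt_12 (d : ℕ) (G : Subgroup (GL (Fin d) ℂ)) [Finite G]
    (v w : Fin d → ℂ)
    (h : ∀ P : MvPolynomial (Fin d) ℂ, IsInvC G P → eval v P = eval w P) :
    ∃ g ∈ G, actCC g v = w := by
  classical
  have : Fintype G := Fintype.ofFinite G
  by_contra hcon
  push_neg at hcon
  set S : Finset (Fin d → ℂ) :=
    Finset.image (fun g : G => actCC (g : GL (Fin d) ℂ) v) Finset.univ with hS
  set T : Finset (Fin d → ℂ) :=
    Finset.image (fun g : G => actCC (g : GL (Fin d) ℂ) w) Finset.univ with hT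
  have hdisj : Disjoint S T := by
    rw [Finset.disjoint_left]
    rintro x hx hx'
    simp only [hS, hT, Finset.mem_image, Finset.mem_univ, true_and] at hx hx'
    obtain ⟨a, ha⟩ := hx
    obtain ⟨b, hb⟩ := hx'
    apply hcon ↑(b⁻¹ * a) (b⁻¹ * a).2
    have : actCC ↑(b⁻¹ * a) v = actCC ↑(b⁻¹ : G) (actCC ↑a v) := by
      rw [← actCC_mul]; rfl
    rw [this, ha, ← hb, ← actCC_mul]
    have : ((b⁻¹ : G) : GL (Fin d) ℂ) * ↑b = 1 := by
      rw [← Subgroup.coe_mul, inv_mul_cancel, Subgroup.coe_one]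
    rw [this, actCC_one]
  obtain ⟨Q, hQ0, hQ1⟩ := sep S T hdisj
  -- the Reynolds average of Q
  set comp : GL (Fin d) ℂ → MvPolynomial (Fin d) ℂ → MvPolynomial (Fin d) ℂ :=
    fun g R => aeval (fun i => ∑ j, C ((g : Matrix (Fin d) (Fin d) ℂ) i j) * X j) R with hcomp
  have heval : ∀ (g : GL (Fin d) ℂ) (x : Fin d → ℂ) (R : MvPolynomial (Fin d) ℂ),
      eval x (comp g R) = eval (actCC g x) R := by
    intro g x R
    rw [hcomp, my_eval_aeval]
    have : (fun i => eval x (∑ j, C ((g : Matrix (Fin d) (Fin d) ℂ) i j) * X j)) = actCC g x := by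
      funext i; simp [actCC, mulVec, dotProduct]
    rw [this]
  set P : MvPolynomial (Fin d) ℂ :=
    C ((Fintype.card G : ℂ))⁻¹ * ∑ g : G, comp (↑g⁻¹) Q with hP
  have hcard : (Fintype.card G : ℂ) ≠ 0 := by
    exact_mod_cast Fintype.card_ne_zero
  have hevP : ∀ y : Fin d → ℂ,
      eval y P = (Fintype.card G : ℂ)⁻¹ * ∑ g : G, eval (actCC ↑g⁻¹ y) Q := by
    intro y
    rw [hP]
    simp only [eval_mul, eval_C, eval_sum]
    congr 1
    exact Finset.sum_congr rfl fun g _ => heval _ _ _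
  have hinv : IsInvC G P := by
    intro g hg x
    rw [hevP, hevP]
    congr 1
    refine Fintype.sum_equiv (Equiv.mulLeft ((⟨g, hg⟩ : G)⁻¹)) _ _ fun a => ?_
    simp only [Equiv.coe_mulLeft]
    rw [← actCC_mul]
    congr 1
  have hv : eval v P = 0 := by
    rw [hevP]
    rw [Finset.sum_eq_zero, mul_zero]
    intro g _
    apply hQ0
    simp only [hS, Finset.mem_image, Finset.mem_univ, true_and]
    exact ⟨g⁻¹, rfl⟩
  have hw : eval w P = 1 := by
    rw [hevP]
    have : ∀ g : G, eval (actCC ↑g⁻¹ w) Q = 1 := by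
      intro g
      apply hQ1
      simp only [hT, Finset.mem_image, Finset.mem_univ, true_and]
      exact ⟨g⁻¹, rfl⟩
    rw [Finset.sum_congr rfl fun g _ => this g]
    simp [inv_mul_cancel₀ hcard]
  have := h P hinv
  rw [hv, hw] at this
  exact zero_ne_one this
end
end

section
/- For y ∈ ℝ^m, the following are equivalent: (i) P(y) = 0 for every real polynomial P in m variables vanishing identically on Y₀ (i.e., y lies in the real Zariski closure Y of Y₀); (ii) there exists v ∈ ℂ^d with p_ℂ(v) = y. In other words, Y = Y_ℂ ∩ ℝ^m where Y_ℂ = p_ℂ(ℂ^d). -/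
/-!
If the ideal `(p₁ - y₁, …, p_m - y_m)` of `ℝ[x]` is proper, the Nullstellensatz over `ℂ` gives a
common complex zero `v`, i.e. `p_ℂ(v) = y`. If instead `1 = ∑ hᵢ (pᵢ - yᵢ)`, apply the (unnormalized)
Reynolds operator `ρ = ∑_{g ∈ G} g`, which is linear over invariants: `|G| = ∑ ρ(hᵢ) (pᵢ - yᵢ)`, and
`ρ(hᵢ) = qᵢ(p)` since the `pᵢ` generate the invariants. Then `Q = ∑ qᵢ (Yᵢ - yᵢ)` satisfies
`Q ∘ p = |G|`, so `Q - |G|` vanishes on `Y₀` but not at `y`.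
Conversely, a polynomial vanishing on `Y₀` vanishes identically after composition with `p`,
hence on `p_ℂ(ℂ^d)`.
-/

open Matrix MvPolynomial

noncomputable section

lemma eval_aeval {σ τ R : Type*} [CommSemiring R] (v : τ → R)
    (f : σ → MvPolynomial τ R) (φ : MvPolynomial σ R) :
    eval v (aeval f φ) = eval (fun i => eval v (f i)) φ :=
  aeval_bind₁ v f φ

lemma aeval_eq_zero_of_forall_eval_eq_zero {σ τ k : Type*} [Field k] [Infinite k]
    {f : σ → MvPolynomial τ k} {φ : MvPolynomial σ k}
    (h : ∀ v : τ → k, eval (fun i => eval v (f i)) φ = 0) : aeval f φ = 0 :=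
  MvPolynomial.funext fun v => by rw [eval_aeval, h, map_zero]

lemma mem_zarClosure_of_pC_eq {d m : ℕ} {p : Fin m → MvPolynomial (Fin d) ℝ} {y : Fin m → ℝ}
    {v : Fin d → ℂ} (hv : pC p v = fun i => (y i : ℂ)) :
    y ∈ zarClosure (Set.range (evalMap p)) := by
  intro P hP
  have hzero : aeval p P = 0 :=
    aeval_eq_zero_of_forall_eval_eq_zero fun w => hP _ ⟨w, rfl⟩
  have hpv : algebraMap ℝ ℂ ∘ y = fun i => aeval v (p i) := by
    funext i; simpa [pC, eval_map, aeval_def] using (congrFun hv i).symm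
  have hPy : algebraMap ℝ ℂ (aeval y P) = 0 := by
    rw [← aeval_algebraMap_apply, hpv, ← aeval_bind₁, ← aeval_eq_bind₁,
      hzero, map_zero]
  simpa using hPy

lemma exists_mem_zeroLocus {σ k : Type*} (K : Type*) [Field k] [Field K] [Algebra k K]
    [IsAlgClosed K] [Finite σ] {I : Ideal (MvPolynomial σ k)} (hI : I ≠ ⊤) :
    ∃ x : σ → K, x ∈ zeroLocus K I := by
  obtain ⟨M, hM, hIM⟩ := I.exists_le_maximal hI
  obtain ⟨x, rfl⟩ := eq_vanishingIdeal_singleton_of_isMaximal K hM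
  exact ⟨x, fun q hq => (mem_vanishingIdeal_singleton_iff x q).1 (hIM hq)⟩

def linearSubst {σ R : Type*} [CommSemiring R] [Fintype σ] (A : Matrix σ σ R) :
    MvPolynomial σ R →ₐ[R] MvPolynomial σ R :=
  aeval fun j => ∑ k, C (A j k) * X k

lemma eval_linearSubst {σ R : Type*} [CommSemiring R] [Fintype σ] (A : Matrix σ σ R)
    (v : σ → R) (Q : MvPolynomial σ R) : eval v (linearSubst A Q) = eval (A *ᵥ v) Q := by
  have hsubst : (fun j => eval v (∑ k, C (A j k) * X k)) = A *ᵥ v :=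
    funext fun j => by simp [Matrix.mulVec, dotProduct]
  rw [linearSubst, eval_aeval, hsubst]

lemma act_act {d : ℕ} (g h : GL (Fin d) ℝ) (v : Fin d → ℝ) : act g (act h v) = act (g * h) v := by
  simp only [act, mulVec_mulVec, Units.val_mul]

section Reynolds

variable {d : ℕ} (G : Subgroup (GL (Fin d) ℝ)) [Fintype G]

def reynolds : MvPolynomial (Fin d) ℝ →ₗ[ℝ] MvPolynomial (Fin d) ℝ :=
  ∑ g : G, (linearSubst ((g : GL (Fin d) ℝ) : Matrix (Fin d) (Fin d) ℝ)).toLinearMap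

lemma eval_reynolds (Q : MvPolynomial (Fin d) ℝ) (v : Fin d → ℝ) :
    eval v (reynolds G Q) = ∑ g : G, eval (act g v) Q := by
  rw [reynolds, LinearMap.sum_apply, map_sum]
  simp only [AlgHom.toLinearMap_apply, eval_linearSubst]
  rfl

lemma isInv_reynolds (Q : MvPolynomial (Fin d) ℝ) : IsInv G (reynolds G Q) := by
  intro g hg v
  simp only [eval_reynolds, act_act]
  exact Fintype.sum_equiv (Equiv.mulRight ⟨g, hg⟩) _ _ fun _ => by simp

lemma reynolds_one : reynolds G 1 = Fintype.card G := by
  simp [reynolds]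

lemma reynolds_mul_of_isInv {F : MvPolynomial (Fin d) ℝ} (hF : IsInv G F)
    (Q : MvPolynomial (Fin d) ℝ) : reynolds G (Q * F) = reynolds G Q * F :=
  MvPolynomial.funext fun v => by
    simp only [eval_reynolds, eval_mul, Finset.sum_mul]
    exact Finset.sum_congr rfl fun g _ => by rw [hF g g.2]

end Reynolds

section Invariants

variable {d m : ℕ} {G : Subgroup (GL (Fin d) ℝ)} {p : Fin m → MvPolynomial (Fin d) ℝ}

lemma exists_aeval_eq_of_isInv (hpgen : ∀ P, IsInv G P ↔ P ∈ Algebra.adjoin ℝ (Set.range p))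
    {Q : MvPolynomial (Fin d) ℝ} (hQ : IsInv G Q) : ∃ q : MvPolynomial (Fin m) ℝ, aeval p q = Q := by
  simpa only [Algebra.adjoin_range_eq_range_aeval, AlgHom.mem_range] using (hpgen Q).1 hQ

lemma isInv_sub_C (hpgen : ∀ P, IsInv G P ↔ P ∈ Algebra.adjoin ℝ (Set.range p))
    (i : Fin m) (c : ℝ) : IsInv G (p i - C c) := fun g hg v => by
  simp only [map_sub, eval_C, (hpgen (p i)).2 (Algebra.subset_adjoin ⟨i, rfl⟩) g hg v]

lemma span_sub_C_ne_top_of_mem_zarClosure [Fintype G]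
    (hpgen : ∀ P, IsInv G P ↔ P ∈ Algebra.adjoin ℝ (Set.range p)) {y : Fin m → ℝ}
    (hy : y ∈ zarClosure (Set.range (evalMap p))) :
    Ideal.span (Set.range fun i => p i - C (y i)) ≠ ⊤ := by
  intro htop
  obtain ⟨h, hh⟩ := Ideal.mem_span_range_iff_exists_fun.1 (Ideal.eq_top_iff_one _ |>.1 htop)
  choose q hq using fun i => exists_aeval_eq_of_isInv hpgen (isInv_reynolds G (h i))
  set R : MvPolynomial (Fin m) ℝ := ∑ i, q i * (X i - C (y i)) with hR
  have hpR : aeval p R = Fintype.card G := by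
    calc aeval p R = ∑ i, reynolds G (h i) * (p i - C (y i)) := by
          simp only [hR, map_sum, map_mul, map_sub, aeval_X, aeval_C, hq, algebraMap_eq]
      _ = reynolds G (∑ i, h i * (p i - C (y i))) := by
          simp only [map_sum, reynolds_mul_of_isInv G (isInv_sub_C hpgen _ _)]
      _ = Fintype.card G := by rw [hh, reynolds_one]
  have hvanish : ∀ s ∈ Set.range (evalMap p), eval s (R - Fintype.card G) = 0 := by
    rintro _ ⟨v, rfl⟩
    unfold evalMap
    rw [map_sub, map_natCast, ← eval_aeval, hpR, map_natCast, sub_self]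
  have hRy_card : eval y R = Fintype.card G := by
    simpa [sub_eq_zero] using hy _ hvanish
  have hRy_zero : eval y R = 0 := by simp [hR]
  exact Fintype.card_ne_zero (α := G) (by exact_mod_cast hRy_card.symm.trans hRy_zero)

end Invariants

theorem stmt_15_general (d m : ℕ) (G : Subgroup (GL (Fin d) ℝ)) [Finite G]
    (p : Fin m → MvPolynomial (Fin d) ℝ)
    (hpgen : ∀ P, IsInv G P ↔ P ∈ Algebra.adjoin ℝ (Set.range p))
    (y : Fin m → ℝ) :
    y ∈ zarClosure (Set.range (evalMap p)) ↔
      ∃ v : Fin d → ℂ, pC p v = fun i => (y i : ℂ) := by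
  have := Fintype.ofFinite G
  refine ⟨fun hy => ?_, fun ⟨v, hv⟩ => mem_zarClosure_of_pC_eq hv⟩
  obtain ⟨v, hv⟩ := exists_mem_zeroLocus ℂ (span_sub_C_ne_top_of_mem_zarClosure hpgen hy)
  refine ⟨v, funext fun i => ?_⟩
  have hvi := hv _ (Ideal.subset_span ⟨i, rfl⟩)
  simpa [pC, eval_map, aeval_def, sub_eq_zero] using hvi

/-- the real Zariski closure `Y` of `Y₀` consists exactly of the
real points of the complex image `Y_ℂ = p_ℂ(ℂ^d)`. -/
theorem stmt_15 (d m : ℕ) (G : Subgroup (GL (Fin d) ℝ)) [Finite G]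
    (p : Fin m → MvPolynomial (Fin d) ℝ) (dd : Fin m → ℕ)
    (hphom : ∀ i, (p i).IsHomogeneous (dd i))
    (hpgen : ∀ P, IsInv G P ↔ P ∈ Algebra.adjoin ℝ (Set.range p))
    (y : Fin m → ℝ) :
    y ∈ zarClosure (Set.range (evalMap p)) ↔
      ∃ v : Fin d → ℂ, pC p v = fun i => (y i : ℂ) :=
  stmt_15_general d m G p hpgen y
end
end

section
/- Let G be a finite subgroup of GL(d,ℂ), let p₁,…,p_m be generators of the ℂ-algebra of G-invariant polynomials on ℂ^d, and p = (p₁,…,p_m) : ℂ^d → ℂ^m. Then the image p(ℂ^d) is Zariski closed: p(ℂ^d) = {y ∈ ℂ^m : P(y) = 0 for every polynomial P ∈ ℂ[y₁,…,y_m] such that P ∘ p is identically zero on ℂ^d}. -/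
open Matrix MvPolynomial

noncomputable section

/-!
Every coordinate `x_j` is a root of the monic polynomial `∏_{g ∈ G} (T - (g x)_j)`, whose
coefficients are `G`-invariant and hence polynomials in `p`; so `ℂ[x]` is integral over `ℂ[y]`
via `y ↦ p`. A point `y` at which the kernel of this map vanishes gives a maximal ideal of `ℂ[y]`
containing the kernel; by lying over it is contracted from a maximal ideal of `ℂ[x]`, which by the
Nullstellensatz is a point `v`, and then `p(v) = y`.
-/

theorem RingHom.isIntegralElem_of_monic_of_mem_lifts {R A : Type*} [CommRing R] [Ring A]
    [Nontrivial A] {f : R →+* A} {F : Polynomial A} (hF : F.Monic) (hlifts : F ∈ Polynomial.lifts f)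
    {x : A} (hx : F.eval x = 0) : f.IsIntegralElem x := by
  obtain ⟨q, hq, -, hq_monic⟩ := Polynomial.lifts_and_degree_eq_and_monic hlifts hF
  exact ⟨q, hq_monic, by rw [Polynomial.eval₂_eq_eval_map, hq, hx]⟩

namespace MvPolynomial

theorem isIntegral_of_isIntegralElem_X {R A τ : Type*} [CommRing R] [CommRing A]
    [Algebra R A] (f : A →ₐ[R] MvPolynomial τ R) (hX : ∀ i, f.toRingHom.IsIntegralElem (X i)) :
    f.toRingHom.IsIntegral := by
  let := f.toRingHom.toAlgebra
  intro P
  induction P using MvPolynomial.induction_on with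
  | C c =>
    have : f (algebraMap R A c) = C c := by rw [f.commutes, algebraMap_eq]
    exact this ▸ isIntegral_algebraMap (R := A) (x := algebraMap R A c)
  | add P Q hP hQ => exact IsIntegral.add hP hQ
  | mul_X P i hP => exact IsIntegral.mul hP (hX i)

theorem aeval_comap {R σ τ : Type*} [CommSemiring R]
    (f : MvPolynomial σ R →ₐ[R] MvPolynomial τ R) (x : τ → R) (P : MvPolynomial σ R) :
    aeval (comap f x) P = aeval x (f P) :=
  DFunLike.congr_fun (algHom_ext (g := (aeval x).comp f) fun i => by simp) P

theorem range_comap_of_isIntegral {K σ τ : Type*} [Field K] [IsAlgClosed K] [Finite τ]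
    (f : MvPolynomial σ K →ₐ[K] MvPolynomial τ K) (hf : f.toRingHom.IsIntegral) :
    Set.range (comap f) = zeroLocus K (RingHom.ker f) := by
  refine subset_antisymm ?_ fun y hy => ?_
  · rintro _ ⟨x, rfl⟩ P hP
    rw [aeval_comap, RingHom.mem_ker.mp hP, map_zero]
  let := f.toRingHom.toAlgebra
  have : Algebra.IsIntegral (MvPolynomial σ K) (MvPolynomial τ K) := ⟨hf⟩
  have hker : RingHom.ker (algebraMap (MvPolynomial σ K) (MvPolynomial τ K)) ≤
      vanishingIdeal K {y} := fun P hP => (mem_vanishingIdeal_singleton_iff y P).mpr (hy P hP)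
  obtain ⟨Q, hQ, hQy⟩ := Ideal.exists_ideal_over_maximal_of_isIntegral _ hker
  obtain ⟨x, rfl⟩ := (isMaximal_iff_eq_vanishingIdeal_singleton).mp hQ
  refine ⟨x, ?_⟩
  funext i
  have hXi : X i - C (y i) ∈ vanishingIdeal K {y} := by simp
  rw [← hQy, Ideal.mem_comap, mem_vanishingIdeal_singleton_iff] at hXi
  change aeval x (f (X i - C (y i))) = 0 at hXi
  simpa [sub_eq_zero, algHom_C] using hXi

end MvPolynomial

section OrbitPolynomial

variable {d : ℕ}

theorem actCC_actCC (g h : GL (Fin d) ℂ) (v : Fin d → ℂ) :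
    actCC g (actCC h v) = actCC (g * h) v := by
  simp [actCC, Matrix.mulVec_mulVec]

def coordForm (g : GL (Fin d) ℂ) (j : Fin d) : MvPolynomial (Fin d) ℂ :=
  ∑ k, C ((g : Matrix (Fin d) (Fin d) ℂ) j k) * X k

theorem eval_coordForm (g : GL (Fin d) ℂ) (j : Fin d) (v : Fin d → ℂ) :
    eval v (coordForm g j) = actCC g v j := by
  simp [coordForm, actCC, Matrix.mulVec, dotProduct]

theorem coordForm_one (j : Fin d) : coordForm 1 j = X j := by
  simp [coordForm, Matrix.one_apply]

def orbitPoly (G : Subgroup (GL (Fin d) ℂ)) [Fintype G] (j : Fin d) :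
    Polynomial (MvPolynomial (Fin d) ℂ) :=
  ∏ g : G, (Polynomial.X - Polynomial.C (coordForm g j))

variable (G : Subgroup (GL (Fin d) ℂ)) [Fintype G]

theorem orbitPoly_monic (j : Fin d) : (orbitPoly G j).Monic :=
  Polynomial.monic_prod_of_monic _ _ fun _ _ => Polynomial.monic_X_sub_C _

theorem orbitPoly_eval_X (j : Fin d) : (orbitPoly G j).eval (X j) = 0 := by
  rw [orbitPoly, Polynomial.eval_prod]
  refine Finset.prod_eq_zero (Finset.mem_univ 1) ?_
  simp [coordForm_one]

theorem orbitPoly_map_eval (j : Fin d) (v : Fin d → ℂ) :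
    (orbitPoly G j).map (eval v) = ∏ g : G, (Polynomial.X - Polynomial.C (actCC g v j)) := by
  simp [orbitPoly, Polynomial.map_prod, eval_coordForm]

theorem isInvC_coeff_orbitPoly (j : Fin d) (n : ℕ) : IsInvC G ((orbitPoly G j).coeff n) := by
  intro h hh v
  rw [← Polynomial.coeff_map, ← Polynomial.coeff_map, orbitPoly_map_eval, orbitPoly_map_eval]
  simp only [actCC_actCC]
  exact congrArg (Polynomial.coeff · n)
    (Equiv.prod_comp (Equiv.mulRight (⟨h, hh⟩ : G))
      fun g : G => Polynomial.X - Polynomial.C (actCC g v j))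

end OrbitPolynomial

theorem evalMapC_eq_comap_aeval {d m : ℕ} (p : Fin m → MvPolynomial (Fin d) ℂ) :
    evalMapC p = comap (aeval p) := by
  funext v i
  simp [evalMapC]

theorem isIntegral_aeval_of_invariants_le_adjoin {d m : ℕ} (G : Subgroup (GL (Fin d) ℂ))
    [Finite G] (p : Fin m → MvPolynomial (Fin d) ℂ)
    (hp : ∀ P, IsInvC G P → P ∈ Algebra.adjoin ℂ (Set.range p)) :
    (aeval (R := ℂ) p).toRingHom.IsIntegral := by
  have := Fintype.ofFinite G
  refine isIntegral_of_isIntegralElem_X _ fun j =>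
    RingHom.isIntegralElem_of_monic_of_mem_lifts (orbitPoly_monic G j) ?_ (orbitPoly_eval_X G j)
  refine (Polynomial.lifts_iff_coeff_lifts _).mpr fun n => ?_
  rw [← aeval_range] at hp
  exact hp _ (isInvC_coeff_orbitPoly G j n)

/-- the image of the orbit map of a finite complex linear group
is Zariski closed. -/
theorem stmt_16 (d m : ℕ) (G : Subgroup (GL (Fin d) ℂ)) [Finite G]
    (p : Fin m → MvPolynomial (Fin d) ℂ)
    (hpgen : ∀ P, IsInvC G P ↔ P ∈ Algebra.adjoin ℂ (Set.range p)) :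
    Set.range (evalMapC p) =
      {y : Fin m → ℂ | ∀ P : MvPolynomial (Fin m) ℂ,
        (∀ v : Fin d → ℂ, eval (evalMapC p v) P = 0) → eval y P = 0} := by
  have hp : (aeval (R := ℂ) p).toRingHom.IsIntegral :=
    isIntegral_aeval_of_invariants_le_adjoin G p fun P => (hpgen P).mp
  refine subset_antisymm ?_ fun y hy => ?_
  · rintro _ ⟨v, rfl⟩ P hP
    exact hP v
  rw [evalMapC_eq_comap_aeval, range_comap_of_isIntegral _ hp]
  refine fun P hP => hy P fun v => ?_
  rw [evalMapC_eq_comap_aeval]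
  exact (aeval_comap _ v P).trans (by rw [RingHom.mem_ker.mp hP, map_zero])
end
end
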